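/- arXiv:1109.0522 — 2 statements merged into one kernel-verified Lean document; each statement's English description precedes it below -/
import Mathlib

section
/- With T_k the odious and T̄_k the evil numbers in {0,…,2^k−1}, for all k ≥ 1 and j ≥ 0: |∑_{x∈T_k} x^{k+j} − ∑_{x∈T̄_k} x^{k+j}| ≤ (k+j)! · 2^{(k+j)(k+j+1)/2}. -/
/-- The odious numbers in `{0, …, 2^k - 1}`: those with an odd binary digit sum. -/
def odious (k : ℕ) : Finset ℕ :=
  (Finset.range (2 ^ k)).filter (fun x => Odd ((Nat.digits 2 x).sum))

/-- The evil numbers in `{0, …, 2^k - 1}`: those with an even binary digit sum. -/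
def evil (k : ℕ) : Finset ℕ :=
  (Finset.range (2 ^ k)).filter (fun x => Even ((Nat.digits 2 x).sum))

/-!
Write `ε x = (-1) ^ s₂(x)` and `s k n = ∑_{x < 2^k} ε x * x ^ n`, the evil minus the odious power
sum. Since `ε (2^k + x) = -ε x` for `x < 2^k`, expanding `(2^k + x)^n` binomially gives
`s (k+1) n = -∑_{m < n} C(n,m) 2^(k(n-m)) s k m`. Hence `s k n = 0` for `n < k` (Prouhet), and for
`n ≥ k` only the `n - k` terms with `k ≤ m < n` survive; with `n - k ≤ 2^(n-k-1)` induction on `k`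
gives `|s k n| ≤ n! 2^(kn - k(k+1)/2)`, and `kn - k(k+1)/2 ≤ n(n+1)/2`.
-/

open Finset Nat

theorem Nat.digits_sum_add_base_pow_mul {b k d x : ℕ} (hb : 1 < b) (hx : x < b ^ k)
    (hd : d ≠ 0) (hdb : d < b) :
    (digits b (x + b ^ k * d)).sum = (digits b x).sum + d := by
  have hlen : (digits b x).length ≤ k := (digits_length_le_iff hb x).2 hx
  rw [← Nat.add_sub_cancel' hlen, ← digits_append_zeroes_append_digits hb (Nat.pos_of_ne_zero hd),
    digits_of_lt b d hd hdb]
  simp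

def signedPowerSum (k n : ℕ) : ℤ :=
  ∑ x ∈ range (2 ^ k), (-1) ^ (digits 2 x).sum * (x : ℤ) ^ n

theorem sum_evil_sub_sum_odious (k n : ℕ) :
    ∑ x ∈ evil k, (x : ℤ) ^ n - ∑ x ∈ odious k, (x : ℤ) ^ n = signedPowerSum k n := by
  have heven : ∑ x ∈ evil k, (-1 : ℤ) ^ (digits 2 x).sum * (x : ℤ) ^ n =
      ∑ x ∈ evil k, (x : ℤ) ^ n :=
    sum_congr rfl fun x hx => by rw [(mem_filter.1 hx).2.neg_one_pow, one_mul]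
  have hodd : ∑ x ∈ odious k, (-1 : ℤ) ^ (digits 2 x).sum * (x : ℤ) ^ n =
      -∑ x ∈ odious k, (x : ℤ) ^ n := by
    rw [← sum_neg_distrib]
    exact sum_congr rfl fun x hx => by rw [(mem_filter.1 hx).2.neg_one_pow, neg_one_mul]
  rw [sub_eq_add_neg, ← heven, ← hodd, signedPowerSum,
    ← sum_filter_add_sum_filter_not (range (2 ^ k)) (fun x => Even (digits 2 x).sum)]
  simp_rw [Nat.not_even_iff_odd]
  rfl

theorem sum_range_two_pow_succ_neg_one_pow_digits_sum {R : Type*} [CommRing R] (k : ℕ)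
    (f : ℕ → R) :
    ∑ x ∈ range (2 ^ (k + 1)), (-1) ^ (digits 2 x).sum * f x =
      -∑ x ∈ range (2 ^ k), (-1) ^ (digits 2 x).sum * (f (2 ^ k + x) - f x) := by
  have hshift : ∀ x ∈ range (2 ^ k),
      (-1 : R) ^ (digits 2 (2 ^ k + x)).sum * f (2 ^ k + x) =
        -((-1) ^ (digits 2 x).sum * f (2 ^ k + x)) := fun x hx => by
    rw [add_comm, ← mul_one (2 ^ k),
      Nat.digits_sum_add_base_pow_mul one_lt_two (mem_range.1 hx) one_ne_zero one_lt_two,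
      mul_one, pow_succ, mul_neg_one, neg_mul]
  rw [pow_succ, mul_two, sum_range_add, sum_congr rfl hshift, sum_neg_distrib]
  simp only [mul_sub, sum_sub_distrib]
  abel

theorem signedPowerSum_succ (k n : ℕ) :
    signedPowerSum (k + 1) n =
      -∑ m ∈ range n, (n.choose m : ℤ) * 2 ^ (k * (n - m)) * signedPowerSum k m := by
  have hdiff (x : ℕ) : ((2 ^ k + x : ℕ) : ℤ) ^ n - (x : ℤ) ^ n =
      ∑ m ∈ range n, (n.choose m : ℤ) * 2 ^ (k * (n - m)) * (x : ℤ) ^ m := by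
    rw [Nat.cast_add, Nat.cast_pow, Nat.cast_ofNat, add_comm, add_pow, sum_range_succ,
      Nat.choose_self, Nat.cast_one, Nat.sub_self, pow_zero, mul_one, mul_one, add_sub_cancel_right]
    refine sum_congr rfl fun m _ => ?_
    rw [pow_mul]
    ring
  rw [signedPowerSum, sum_range_two_pow_succ_neg_one_pow_digits_sum]
  simp only [hdiff, mul_sum, signedPowerSum]
  rw [sum_comm]
  simp only [mul_left_comm]

theorem signedPowerSum_eq_zero_of_lt {k n : ℕ} (h : n < k) : signedPowerSum k n = 0 := by
  induction k generalizing n with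
  | zero => omega
  | succ k ih =>
    rw [signedPowerSum_succ, neg_eq_zero]
    refine sum_eq_zero fun m hm => ?_
    rw [ih (by grind), mul_zero]

theorem Nat.choose_mul_factorial_le {n m : ℕ} (h : m ≤ n) : n.choose m * m ! ≤ n ! := by
  rw [← choose_mul_factorial_mul_factorial h]
  exact Nat.le_mul_of_pos_right _ (factorial_pos _)

theorem Nat.sub_mul_two_pow_succ_le_two_pow {k n : ℕ} (h : k < n) :
    (n - k) * 2 ^ (k + 1) ≤ 2 ^ n := by
  obtain ⟨d, rfl⟩ := Nat.exists_eq_add_of_lt h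
  rw [show k + d + 1 - k = d + 1 by omega, show k + d + 1 = d + (k + 1) by ring, pow_add _ d]
  exact Nat.mul_le_mul_right _ (Nat.lt_two_pow_self)

theorem Nat.succ_mul_succ_succ_div_two (k : ℕ) :
    (k + 1) * (k + 2) / 2 = k * (k + 1) / 2 + (k + 1) := by
  rw [show (k + 1) * (k + 2) = k * (k + 1) + (k + 1) * 2 by ring, Nat.add_mul_div_right _ _ two_pos]

theorem abs_choose_mul_two_pow_mul_mul_two_pow_le {k m n T : ℕ} {s : ℤ} (hmn : m ≤ n)
    (hs : |s| * 2 ^ T ≤ m ! * 2 ^ (k * m)) :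
    |(n.choose m : ℤ) * 2 ^ (k * (n - m)) * s| * 2 ^ T ≤ n ! * 2 ^ (k * n) :=
  calc |(n.choose m : ℤ) * 2 ^ (k * (n - m)) * s| * 2 ^ T
      = (n.choose m : ℤ) * 2 ^ (k * (n - m)) * (|s| * 2 ^ T) := by
        rw [abs_mul, abs_of_nonneg (by positivity)]; ring
    _ ≤ (n.choose m : ℤ) * 2 ^ (k * (n - m)) * (m ! * 2 ^ (k * m)) :=
        mul_le_mul_of_nonneg_left hs (by positivity)
    _ = ((n.choose m * m ! : ℕ) : ℤ) * 2 ^ (k * (n - m) + k * m) := by push_cast; ring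
    _ = ((n.choose m * m ! : ℕ) : ℤ) * 2 ^ (k * n) := by rw [← mul_add, Nat.sub_add_cancel hmn]
    _ ≤ n ! * 2 ^ (k * n) := by gcongr; exact_mod_cast Nat.choose_mul_factorial_le hmn

theorem abs_signedPowerSum_mul_two_pow_le {k n : ℕ} (h : k ≤ n) :
    |signedPowerSum k n| * 2 ^ (k * (k + 1) / 2) ≤ n ! * 2 ^ (k * n) := by
  induction k generalizing n with
  | zero =>
    have h1 : (1 : ℤ) ≤ n ! := mod_cast n.factorial_pos
    simpa [signedPowerSum] using (pow_le_one₀ (n := n) le_rfl zero_le_one).trans h1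
  | succ k ih =>
    set T := k * (k + 1) / 2
    have hterm : ∀ m ∈ Ico k n, |(n.choose m : ℤ) * 2 ^ (k * (n - m)) * signedPowerSum k m| *
        2 ^ T ≤ n ! * 2 ^ (k * n) := fun m hm =>
      abs_choose_mul_two_pow_mul_mul_two_pow_le (mem_Ico.1 hm).2.le (ih (mem_Ico.1 hm).1)
    have hsum : |signedPowerSum (k + 1) n| * 2 ^ T ≤ (n - k : ℕ) * (n ! * 2 ^ (k * n)) := by
      rw [signedPowerSum_succ, abs_neg, ← sum_range_add_sum_Ico _ (by omega : k ≤ n),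
        sum_eq_zero fun m hm => by rw [signedPowerSum_eq_zero_of_lt (mem_range.1 hm), mul_zero],
        zero_add, ← Nat.card_Ico, ← nsmul_eq_mul]
      calc _ ≤ (∑ m ∈ Ico k n,
              |(n.choose m : ℤ) * 2 ^ (k * (n - m)) * signedPowerSum k m|) * 2 ^ T :=
            mul_le_mul_of_nonneg_right (abs_sum_le_sum_abs _ _) (by positivity)
        _ ≤ _ := by rw [sum_mul]; exact sum_le_card_nsmul _ _ _ hterm
    calc |signedPowerSum (k + 1) n| * 2 ^ ((k + 1) * (k + 1 + 1) / 2)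
        = |signedPowerSum (k + 1) n| * 2 ^ T * 2 ^ (k + 1) := by
          rw [Nat.succ_mul_succ_succ_div_two, pow_add, mul_assoc]
      _ ≤ (n - k : ℕ) * (n ! * 2 ^ (k * n)) * 2 ^ (k + 1) := by gcongr
      _ = n ! * 2 ^ (k * n) * ((n - k) * 2 ^ (k + 1) : ℕ) := by push_cast; ring
      _ ≤ n ! * 2 ^ (k * n) * 2 ^ n := by
          gcongr; exact_mod_cast Nat.sub_mul_two_pow_succ_le_two_pow h
      _ = n ! * 2 ^ ((k + 1) * n) := by rw [mul_assoc, ← pow_add, Nat.add_one_mul]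

theorem Nat.mul_le_triangle_add_triangle (k n : ℕ) :
    k * n ≤ n * (n + 1) / 2 + k * (k + 1) / 2 := by
  have hn := Nat.div_two_mul_two_of_even (Nat.even_mul_succ_self n)
  have hk := Nat.div_two_mul_two_of_even (Nat.even_mul_succ_self k)
  zify at hn hk ⊢
  nlinarith [sq_nonneg ((n : ℤ) - k)]

theorem powerSum_diff_abs_le_general (k j : ℕ) :
    |(∑ x ∈ odious k, (x : ℤ) ^ (k + j)) - ∑ x ∈ evil k, (x : ℤ) ^ (k + j)| ≤
      ((k + j).factorial : ℤ) * 2 ^ ((k + j) * (k + j + 1) / 2) := by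
  rw [abs_sub_comm, sum_evil_sub_sum_odious]
  have hbound := abs_signedPowerSum_mul_two_pow_le (Nat.le_add_right k j)
  set n := k + j
  refine le_of_mul_le_mul_right ?_ (pow_pos two_pos (k * (k + 1) / 2) : (0 : ℤ) < _)
  calc |signedPowerSum k n| * 2 ^ (k * (k + 1) / 2)
      ≤ n ! * 2 ^ (k * n) := hbound
    _ ≤ n ! * 2 ^ (n * (n + 1) / 2 + k * (k + 1) / 2) := by
      gcongr
      · norm_num
      · exact Nat.mul_le_triangle_add_triangle k n
    _ = n ! * 2 ^ (n * (n + 1) / 2) * 2 ^ (k * (k + 1) / 2) := by rw [pow_add, mul_assoc]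

/-- `|S_{k+j}(T_k) - S_{k+j}(T̄_k)| ≤ (k+j)! 2^((k+j)(k+j+1)/2)` for `k ≥ 1`, `j ≥ 0`. -/
theorem powerSum_diff_abs_le (k j : ℕ) (hk : 1 ≤ k) :
    |(∑ x ∈ odious k, (x : ℤ) ^ (k + j)) - ∑ x ∈ evil k, (x : ℤ) ^ (k + j)| ≤
      ((k + j).factorial : ℤ) * 2 ^ ((k + j) * (k + j + 1) / 2) :=
  powerSum_diff_abs_le_general k j
end

section
/- The recursively defined sets T_0 = ∅, T_{j+1} = T_j ∪ ((({0,…,2^j−1} \ T_j)) + 2^j) coincide with the sets of odious numbers: T_k = {x ∈ {0,…,2^k−1} : the binary digit sum of x is odd}. -/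
/-- The recursively defined sets `T_0 = ∅`, `T_{j+1} = T_j ∪ (({0,…,2^j-1} \ T_j) + 2^j)`. -/
def Trec : ℕ → Finset ℕ
  | 0 => ∅
  | (j + 1) => Trec j ∪ ((Finset.range (2 ^ j) \ Trec j).image (· + 2 ^ j))

theorem Nat.digits_sum_add_pow {b j y : ℕ} (hb : 1 < b) (hy : y < b ^ j) :
    (Nat.digits b (y + b ^ j)).sum = (Nat.digits b y).sum + 1 := by
  have hlen : (Nat.digits b y).length ≤ j := by
    rcases eq_or_ne y 0 with rfl | hy0
    · simp
    · rw [Nat.length_digits b y hb hy0]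
      exact Nat.log_lt_of_lt_pow hy0 hy
  have h := Nat.digits_append_zeroes_append_digits (k := j - (Nat.digits b y).length)
    (m := 1) (n := y) hb one_pos
  rw [Nat.add_sub_cancel' hlen, mul_one] at h
  rw [← h]
  simp [Nat.digits_of_lt b 1 one_ne_zero hb]

theorem range_sdiff_odious (k : ℕ) : Finset.range (2 ^ k) \ odious k = evil k := by
  ext x
  simp only [odious, evil, Finset.mem_sdiff, Finset.mem_filter, Finset.mem_range,
    ← Nat.not_odd_iff_even]
  tauto

theorem odious_succ (k : ℕ) : odious (k + 1) = odious k ∪ (evil k).image (· + 2 ^ k) := by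
  ext x
  simp only [odious, evil, Finset.mem_union, Finset.mem_image, Finset.mem_filter,
    Finset.mem_range, pow_succ, mul_two]
  rcases lt_or_ge x (2 ^ k) with hx | hx
  · constructor
    · rintro ⟨-, hodd⟩
      exact Or.inl ⟨hx, hodd⟩
    · rintro (⟨-, hodd⟩ | ⟨y, -, rfl⟩)
      · exact ⟨by omega, hodd⟩
      · omega
  · obtain ⟨y, rfl⟩ : ∃ y, x = y + 2 ^ k := ⟨x - 2 ^ k, by omega⟩
    have hshift (hy : y < 2 ^ k) := Nat.digits_sum_add_pow (j := k) one_lt_two hy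
    constructor
    · rintro ⟨hy, hodd⟩
      rw [hshift (by omega), Nat.odd_add_one, Nat.not_odd_iff_even] at hodd
      exact Or.inr ⟨y, ⟨by omega, hodd⟩, rfl⟩
    · rintro (⟨hy, -⟩ | ⟨z, ⟨hz, heven⟩, hzy⟩)
      · omega
      · obtain rfl : z = y := by omega
        exact ⟨by omega, by rw [hshift hz]; exact heven.add_one⟩

/-- The recursively defined sets `T_k` coincide with the sets of odious numbers. -/
theorem Trec_eq_odious (k : ℕ) : Trec k = odious k := by
  induction k with
  | zero => decide
  | succ k ih => rw [Trec, ih, range_sdiff_odious, odious_succ]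
end
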